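/- Let p₁, q₁, p₂, q₂ ∈ ℝ^d and let P₁, P₂ : [0,1] → ℝ^{2d} be the Bezdek–Connelly paths. If ‖p₁ − p₂‖ ≠ ‖q₁ − q₂‖, then t ↦ ‖P₁(t) − P₂(t)‖² is strictly monotone on [0,1]. -/

import Mathlib

/-!
Both coordinates of `bcPath` are linear in `(p, q)`, so `P₁(t) - P₂(t)` is the path of
`(p₁ - p₂, q₁ - q₂)`. For a single path, `sin² + cos² = 1` and the parallelogram law give
`‖P(t)‖² = (‖p‖² + ‖q‖²)/2 + (‖p‖² - ‖q‖²)/2 · cos (π t)`, an affine function of the strictly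
decreasing `cos (π t)` with nonzero slope.
-/

open Real

noncomputable def bcPath {d : ℕ} (p q : EuclideanSpace ℝ (Fin d)) (t : ℝ) :
    EuclideanSpace ℝ (Fin d ⊕ Fin d) :=
  WithLp.toLp 2 (Sum.elim ((1/2 : ℝ) • (p + q) + (Real.cos (Real.pi * t) / 2) • (p - q))
           ((Real.sin (Real.pi * t) / 2) • (p - q)))

theorem EuclideanSpace.norm_sq_toLp_sum_elim {𝕜 ι κ : Type*} [RCLike 𝕜] [Fintype ι] [Fintype κ]
    (x : ι → 𝕜) (y : κ → 𝕜) :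
    ‖(WithLp.toLp 2 (Sum.elim x y) : EuclideanSpace 𝕜 (ι ⊕ κ))‖ ^ 2 =
      ‖(WithLp.toLp 2 x : EuclideanSpace 𝕜 ι)‖ ^ 2 + ‖(WithLp.toLp 2 y : EuclideanSpace 𝕜 κ)‖ ^ 2 := by
  simp [EuclideanSpace.norm_sq_eq, Fintype.sum_sum_type]

theorem StrictAntiOn.strictMonoOn_or_strictAntiOn_const_add_mul {α : Type*} [Preorder α]
    {f : α → ℝ} {s : Set α} (hf : StrictAntiOn f s) (a : ℝ) {b : ℝ} (hb : b ≠ 0) :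
    StrictMonoOn (fun x => a + b * f x) s ∨ StrictAntiOn (fun x => a + b * f x) s := by
  rcases hb.lt_or_gt with hb | hb
  · exact .inl fun x hx y hy hxy => by nlinarith [hf hx hy hxy]
  · exact .inr fun x hx y hy hxy => by nlinarith [hf hx hy hxy]

theorem strictAntiOn_cos_pi_mul : StrictAntiOn (fun t => cos (π * t)) (Set.Icc 0 1) := by
  refine strictAntiOn_cos.comp_strictMonoOn ((strictMono_mul_left_of_pos pi_pos).strictMonoOn _) ?_
  rintro t ⟨h0, h1⟩
  exact ⟨by positivity, by nlinarith [pi_pos]⟩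

theorem bcPath_sub {d : ℕ} (p₁ q₁ p₂ q₂ : EuclideanSpace ℝ (Fin d)) (t : ℝ) :
    bcPath p₁ q₁ t - bcPath p₂ q₂ t = bcPath (p₁ - p₂) (q₁ - q₂) t := by
  ext (i | i) <;>
    simp only [bcPath, PiLp.sub_apply, WithLp.ofLp_sub, Sum.elim_inl, Sum.elim_inr, Pi.add_apply,
      Pi.sub_apply, Pi.smul_apply, smul_eq_mul] <;>
    ring

theorem norm_bcPath_sq {d : ℕ} (p q : EuclideanSpace ℝ (Fin d)) (t : ℝ) :
    ‖bcPath p q t‖ ^ 2 = (‖p‖ ^ 2 + ‖q‖ ^ 2) / 2 + (‖p‖ ^ 2 - ‖q‖ ^ 2) / 2 * cos (π * t) := by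
  rw [bcPath, EuclideanSpace.norm_sq_toLp_sum_elim]
  simp only [WithLp.toLp_add, WithLp.toLp_sub, WithLp.toLp_smul, WithLp.toLp_ofLp]
  simp only [← real_inner_self_eq_norm_sq, inner_add_left, inner_add_right, inner_sub_left,
    inner_sub_right, real_inner_smul_left, real_inner_smul_right]
  linear_combination
    (inner ℝ p p - inner ℝ p q - inner ℝ q p + inner ℝ q q) / 4 * sin_sq_add_cos_sq (π * t)

theorem bcPath_sq_dist_strict_monotone {d : ℕ}
    (p₁ q₁ p₂ q₂ : EuclideanSpace ℝ (Fin d))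
    (h : ‖p₁ - p₂‖ ≠ ‖q₁ - q₂‖) :
    StrictMonoOn (fun t => ‖bcPath p₁ q₁ t - bcPath p₂ q₂ t‖ ^ 2) (Set.Icc (0:ℝ) 1) ∨
    StrictAntiOn (fun t => ‖bcPath p₁ q₁ t - bcPath p₂ q₂ t‖ ^ 2) (Set.Icc (0:ℝ) 1) := by
  have hsq : (‖p₁ - p₂‖ ^ 2 - ‖q₁ - q₂‖ ^ 2) / 2 ≠ 0 := by
    rw [div_ne_zero_iff, sub_ne_zero, Ne, sq_eq_sq₀ (norm_nonneg _) (norm_nonneg _)]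
    exact ⟨h, two_ne_zero⟩
  simp_rw [bcPath_sub, norm_bcPath_sq]
  exact strictAntiOn_cos_pi_mul.strictMonoOn_or_strictAntiOn_const_add_mul _ hsq
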